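/- Identity compilation preserves trace equality (first part of Lemma 3): In the WHILE-like languages Source and Target, regard every Source program as a Target program via the identity compiler. For all programs P1 and P2, if beh([P1]) = beh([P2]) — equality of behaviors in the unique Source context, the identity context — then for every Target context CT (either the identity hole or ⌈·⌉), beh(CT[P1]) = beh(CT[P2]). -/
import Mathlib


/-! ## States, expressions, programs -/

/-- States assign a natural number to every variable. -/
abbrev St (Var : Type) := Var → ℕ

/-- Arithmetic expressions. -/
inductive Expr (Var : Type) where
  | num (n : ℕ)
  | var (v : Var)
  | add (e1 e2 : Expr Var)
  | mul (e1 e2 : Expr Var)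

/-- Evaluation of an expression in a state. -/
def Expr.eval {Var : Type} (s : St Var) : Expr Var → ℕ
  | .num n => n
  | .var v => s v
  | .add e1 e2 => e1.eval s + e2.eval s
  | .mul e1 e2 => e1.eval s * e2.eval s

/-- The set of variables occurring in an expression. -/
def Expr.vars {Var : Type} : Expr Var → Set Var
  | .num _ => ∅
  | .var v => {v}
  | .add e1 e2 => e1.vars ∪ e2.vars
  | .mul e1 e2 => e1.vars ∪ e2.vars

/-- State update. -/
def upd {Var : Type} [DecidableEq Var] (s : St Var) (v : Var) (n : ℕ) : St Var :=
  fun x => if x = v then n else s x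

/-- WHILE programs, common to Source and Target. -/
inductive Prog (Var : Type) where
  | skip
  | assign (v : Var) (e : Expr Var)
  | seq (p q : Prog Var)
  | whileE (e : Expr Var) (p : Prog Var)

/-- Step labels: the internal label `H` and the observable label `!` (bang). -/
inductive Lab where
  | h
  | bang
deriving DecidableEq

/-- The labeled small-step semantics of programs.  A step
`PStep isHigh s p l s' r` goes from configuration `(s, p)` to state `s'`,
emitting the optional label `l`; `r = none` means the program terminates (✓)
and `r = some p'` means control continues with `p'`. -/
inductive PStep {Var : Type} [DecidableEq Var] (isHigh : Var → Prop) :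
    St Var → Prog Var → Option Lab → St Var → Option (Prog Var) → Prop where
  | skip {s} :
      PStep isHigh s .skip none s none
  | asnH {s v e} : isHigh v → s v ≠ Expr.eval s e →
      PStep isHigh s (.assign v e) (some .h) (upd s v (Expr.eval s e)) none
  | asnHeq {s v e} : isHigh v → s v = Expr.eval s e →
      PStep isHigh s (.assign v e) none s none
  | asnL {s v e} : ¬ isHigh v → (∀ x ∈ Expr.vars e, ¬ isHigh x) →
      PStep isHigh s (.assign v e) none (upd s v (Expr.eval s e)) none
  | seq1 {s p q l s'} : PStep isHigh s p l s' none →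
      PStep isHigh s (.seq p q) l s' (some q)
  | seq2 {s p q l s' p'} : PStep isHigh s p l s' (some p') →
      PStep isHigh s (.seq p q) l s' (some (.seq p' q))
  | while0 {s e p} : Expr.eval s e = 0 →
      PStep isHigh s (.whileE e p) none s (some .skip)
  | while1 {s e p} : Expr.eval s e ≠ 0 →
      PStep isHigh s (.whileE e p) none s (some (.seq p (.whileE e p)))

/-! ## Traces and behaviors -/

/-- An abstract trace: the initial state followed by, for each step, the
(optional) emitted label and the resulting state.  A finite trace implicitly
ends with the termination marker ✓; an infinite trace records infinitely many
steps. -/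
inductive Trace (Var : Type) where
  | fin (s0 : St Var) (steps : List (Option Lab × St Var))
  | inf (s0 : St Var) (steps : Stream' (Option Lab × St Var))

/-- A finite, terminating run of term `p` from state `s`, producing the given
list of steps (the last step terminates with ✓). -/
inductive FinRun {Var Tm : Type}
    (Step : St Var → Tm → Option Lab → St Var → Option Tm → Prop) :
    St Var → Tm → List (Option Lab × St Var) → Prop where
  | last {s p l s'} : Step s p l s' none →
      FinRun Step s p [(l, s')]
  | cons {s p l s' p' tr} : Step s p l s' (some p') → FinRun Step s' p' tr →
      FinRun Step s p ((l, s') :: tr)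

/-- An infinite run of term `p` from state `s0`, producing the given stream of steps. -/
def InfRun {Var Tm : Type}
    (Step : St Var → Tm → Option Lab → St Var → Option Tm → Prop)
    (s0 : St Var) (p : Tm) (steps : Stream' (Option Lab × St Var)) : Prop :=
  ∃ ps : Stream' Tm, ps 0 = p ∧
    ∀ n, Step (match n with | 0 => s0 | Nat.succ m => (steps m).2)
      (ps n) (steps n).1 (steps n).2 (some (ps (n + 1)))

/-- The behavior of a term: the set of all its abstract traces, from every
initial state. -/
def beh {Var Tm : Type}
    (Step : St Var → Tm → Option Lab → St Var → Option Tm → Prop) (p : Tm) :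
    Set (Trace Var) :=
  { t | (∃ s0 steps, t = Trace.fin s0 steps ∧ FinRun Step s0 p steps) ∨
        (∃ s0 steps, t = Trace.inf s0 steps ∧ InfRun Step s0 p steps) }

/-! ## Observable events, low-equivalence and noninterference -/

/-- Observable events: states, `!` and ✓ (the label `H` is internal). -/
inductive ObsEv (Var : Type) where
  | state (s : St Var)
  | bang
  | tick

/-- The observable events contributed by one step: the internal label `H` is
erased, `!` is kept, and the resulting state is recorded. -/
def stepObs {Var : Type} : Option Lab × St Var → List (ObsEv Var)
  | (some .bang, s) => [.bang, .state s]
  | (_, s) => [.state s]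

/-- The sequence of observable events of a trace (internal `H` events erased),
as a partial function on positions. -/
def Trace.obs {Var : Type} : Trace Var → ℕ → Option (ObsEv Var)
  | .fin s0 steps => fun n =>
      (ObsEv.state s0 :: (steps.flatMap stepObs ++ [ObsEv.tick]))[n]?
  | .inf s0 steps => fun n =>
      (ObsEv.state s0 :: (List.range (n + 1)).flatMap (fun i => stepObs (steps i)))[n]?

/-- The initial state of a trace. -/
def Trace.init {Var : Type} : Trace Var → St Var
  | .fin s0 _ => s0
  | .inf s0 _ => s0

/-- Low-equivalence of states: agreement on every low variable. -/
def stLowEq {Var : Type} (isHigh : Var → Prop) (s1 s2 : St Var) : Prop :=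
  ∀ v, ¬ isHigh v → s1 v = s2 v

/-- Low-equivalence of observable events. -/
def evLowEq {Var : Type} (isHigh : Var → Prop) : ObsEv Var → ObsEv Var → Prop
  | .state s1, .state s2 => stLowEq isHigh s1 s2
  | .bang, .bang => True
  | .tick, .tick => True
  | _, _ => False

/-- Low-equivalence lifted to optional observable events (positions beyond the
end of both traces match). -/
def oLowEq {Var : Type} (isHigh : Var → Prop) :
    Option (ObsEv Var) → Option (ObsEv Var) → Prop
  | some a, some b => evLowEq isHigh a b
  | none, none => True
  | _, _ => False

/-- Low-equivalence of traces: pointwise low-equivalence of their sequences of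
observable events. -/
def traceLowEq {Var : Type} (isHigh : Var → Prop) (t1 t2 : Trace Var) : Prop :=
  ∀ n, oLowEq isHigh (t1.obs n) (t2.obs n)

/-- Noninterference as a hyperproperty. -/
def NI {Var : Type} (isHigh : Var → Prop) : Set (Set (Trace Var)) :=
  { π | ∀ t1 ∈ π, ∀ t2 ∈ π,
      stLowEq isHigh t1.init t2.init → traceLowEq isHigh t1 t2 }

/-! ## The Target language: contexts -/

/-- Whole Target terms: a program plugged either into the identity hole or
into the context `⌈·⌉`. -/
inductive TTm (Var : Type) where
  | plain (p : Prog Var)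
  | banged (p : Prog Var)

/-- The context `⌈·⌉` re-labels the internal label `H` to the observable `!`. -/
def relabel : Option Lab → Option Lab
  | some .h => some .bang
  | l => l

/-- The semantics of whole Target terms: `⌈p⌉` steps exactly as `p` except that
every step labeled `H` is re-labeled to `!`. -/
inductive TStep {Var : Type} [DecidableEq Var] (isHigh : Var → Prop) :
    St Var → TTm Var → Option Lab → St Var → Option (TTm Var) → Prop where
  | plain {s p l s' r} : PStep isHigh s p l s' r →
      TStep isHigh s (.plain p) l s' (r.map TTm.plain)
  | banged {s p l s' r} : PStep isHigh s p l s' r →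
      TStep isHigh s (.banged p) (relabel l) s' (r.map TTm.banged)

/-- Target contexts: the identity hole and `⌈·⌉`. -/
inductive CtxT where
  | hole
  | bang

/-- Plugging a program into a Target context. -/
def plugT {Var : Type} : CtxT → Prog Var → TTm Var
  | .hole, p => .plain p
  | .bang, p => .banged p

section Aux

variable {Var : Type} [DecidableEq Var] {isHigh : Var → Prop}

/-- relabel a step pair -/
def rlStep {Var : Type} (x : Option Lab × St Var) : Option Lab × St Var :=
  (relabel x.1, x.2)

/-- relabel a trace -/
def trRel {Var : Type} : Trace Var → Trace Var
  | .fin s0 steps => .fin s0 (steps.map rlStep)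
  | .inf s0 steps => .inf s0 (fun n => rlStep (steps n))

lemma tstep_plain_inv {s t l s' r'} (h : TStep isHigh s t l s' r') :
    ∀ p, t = .plain p → ∃ r, PStep isHigh s p l s' r ∧ r' = r.map TTm.plain := by
  cases h with
  | plain hp => rintro p ⟨rfl⟩; exact ⟨_, hp, rfl⟩
  | banged hp => rintro p h; cases h

lemma tstep_banged_inv {s t l s' r'} (h : TStep isHigh s t l s' r') :
    ∀ p, t = .banged p →
      ∃ l0 r, PStep isHigh s p l0 s' r ∧ l = relabel l0 ∧ r' = r.map TTm.banged := by
  cases h with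
  | plain hp => rintro p h; cases h
  | banged hp => rintro p ⟨rfl⟩; exact ⟨_, _, hp, rfl, rfl⟩

lemma finRun_plain_mp {s t tr} (h : FinRun (TStep isHigh) s t tr) :
    ∀ p, t = .plain p → FinRun (PStep isHigh) s p tr := by
  induction h with
  | @last s t l s' hstep =>
    rintro p rfl
    obtain ⟨r, hp, hr⟩ := tstep_plain_inv hstep p rfl
    cases r with
    | none => exact FinRun.last hp
    | some q => simp at hr
  | @cons s t l s' t' tr hstep _ ih =>
    rintro p rfl
    obtain ⟨r, hp, hr⟩ := tstep_plain_inv hstep p rfl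
    cases r with
    | none => simp at hr
    | some q =>
      simp at hr; subst hr
      exact FinRun.cons hp (ih _ rfl)

lemma finRun_plain {s p tr} :
    FinRun (TStep isHigh) s (.plain p) tr ↔ FinRun (PStep isHigh) s p tr := by
  constructor
  · intro h; exact finRun_plain_mp h p rfl
  · intro h
    induction h with
    | last hp => exact FinRun.last (TStep.plain hp)
    | cons hp _ ih => exact FinRun.cons (TStep.plain (r := some _) hp) ih

lemma finRun_banged_mp {s t tr} (h : FinRun (TStep isHigh) s t tr) :
    ∀ p, t = .banged p →
      ∃ tr0, FinRun (PStep isHigh) s p tr0 ∧ tr = tr0.map rlStep := by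
  induction h with
  | @last s t l s' hstep =>
    rintro p rfl
    obtain ⟨l0, r, hp, hl, hr⟩ := tstep_banged_inv hstep p rfl
    cases r with
    | none => exact ⟨[(l0, s')], FinRun.last hp, by simp [rlStep, hl]⟩
    | some q => simp at hr
  | @cons s t l s' t' tr hstep _ ih =>
    rintro p rfl
    obtain ⟨l0, r, hp, hl, hr⟩ := tstep_banged_inv hstep p rfl
    cases r with
    | none => simp at hr
    | some q =>
      simp at hr; subst hr
      obtain ⟨tr0, h0, htr⟩ := ih _ rfl
      exact ⟨(l0, s') :: tr0, FinRun.cons hp h0, by simp [rlStep, hl, htr]⟩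

lemma finRun_banged {s p tr} :
    FinRun (TStep isHigh) s (.banged p) tr ↔
      ∃ tr0, FinRun (PStep isHigh) s p tr0 ∧ tr = tr0.map rlStep := by
  constructor
  · intro h; exact finRun_banged_mp h p rfl
  · rintro ⟨tr0, h0, rfl⟩
    induction h0 with
    | last hp => exact FinRun.last (TStep.banged (r := none) hp)
    | cons hp _ ih => exact FinRun.cons (TStep.banged (r := some _) hp) ih

lemma infRun_plain {s0 p steps} :
    InfRun (TStep isHigh) s0 (.plain p) steps ↔ InfRun (PStep isHigh) s0 p steps := by
  constructor
  · rintro ⟨ps, hps0, hstep⟩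
    have hall : ∀ n, ∃ q, ps n = .plain q := by
      intro n
      induction n with
      | zero => exact ⟨p, hps0⟩
      | succ m ih =>
        obtain ⟨q, hq⟩ := ih
        have hs := hstep m
        rw [hq] at hs
        obtain ⟨r, hp, hr⟩ := tstep_plain_inv hs q rfl
        cases r with
        | none => simp at hr
        | some q' => simp at hr; exact ⟨q', hr⟩
    choose qs hqs using hall
    refine ⟨qs, ?_, ?_⟩
    · have h0 := hqs 0; rw [hps0] at h0; injection h0 with h0; exact h0.symm
    · intro n
      have hs := hstep n
      rw [hqs n, hqs (n + 1)] at hs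
      obtain ⟨r, hp, hr⟩ := tstep_plain_inv hs _ rfl
      cases r with
      | none => simp at hr
      | some q' => simp at hr; subst hr; exact hp
  · rintro ⟨ps, hps0, hstep⟩
    refine ⟨fun n => .plain (ps n), ?_, fun n => TStep.plain (r := some _) (hstep n)⟩
    show TTm.plain (ps 0) = _; rw [hps0]

lemma infRun_banged {s0 p steps} :
    InfRun (TStep isHigh) s0 (.banged p) steps ↔
      ∃ st0, InfRun (PStep isHigh) s0 p st0 ∧ steps = fun n => rlStep (st0 n) := by
  constructor
  · rintro ⟨ps, hps0, hstep⟩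
    have hall : ∀ n, ∃ q, ps n = .banged q := by
      intro n
      induction n with
      | zero => exact ⟨p, hps0⟩
      | succ m ih =>
        obtain ⟨q, hq⟩ := ih
        have hs := hstep m
        rw [hq] at hs
        obtain ⟨l0, r, hp, hl, hr⟩ := tstep_banged_inv hs q rfl
        cases r with
        | none => simp at hr
        | some q' => simp at hr; exact ⟨q', hr⟩
    choose qs hqs using hall
    have hstep' : ∀ n, ∃ l0, PStep isHigh
        (match n with | 0 => s0 | Nat.succ m => (steps m).2)
        (qs n) l0 (steps n).2 (some (qs (n + 1))) ∧ (steps n).1 = relabel l0 := by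
      intro n
      have hs := hstep n
      rw [hqs n, hqs (n + 1)] at hs
      obtain ⟨l0, r, hp, hl, hr⟩ := tstep_banged_inv hs _ rfl
      cases r with
      | none => simp at hr
      | some q' =>
        simp at hr; subst hr
        exact ⟨l0, hp, hl⟩
    choose ls hls hrel using hstep'
    refine ⟨fun n => (ls n, (steps n).2), ⟨qs, ?_, fun n => hls n⟩, ?_⟩
    · have h0 := hqs 0; rw [hps0] at h0; injection h0 with h0; exact h0.symm
    · funext n
      show steps n = (relabel (ls n), (steps n).2)
      rw [← hrel n]
  · rintro ⟨st0, ⟨ps, hps0, hstep⟩, rfl⟩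
    refine ⟨fun n => .banged (ps n), ?_, fun n => ?_⟩
    · show TTm.banged (ps 0) = _; rw [hps0]
    · exact TStep.banged (r := some (ps (n + 1))) (hstep n)

lemma beh_plain (p : Prog Var) :
    beh (TStep isHigh) (.plain p) = beh (PStep isHigh) p := by
  ext t
  simp only [beh, Set.mem_setOf_eq, finRun_plain, infRun_plain]

lemma beh_banged (p : Prog Var) :
    beh (TStep isHigh) (.banged p) = trRel '' beh (PStep isHigh) p := by
  ext t
  constructor
  · rintro (⟨s0, steps, rfl, hfin⟩ | ⟨s0, steps, rfl, hinf⟩)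
    · obtain ⟨tr0, h0, rfl⟩ := finRun_banged.mp hfin
      exact ⟨.fin s0 tr0, Or.inl ⟨s0, tr0, rfl, h0⟩, rfl⟩
    · obtain ⟨st0, h0, rfl⟩ := infRun_banged.mp hinf
      exact ⟨.inf s0 st0, Or.inr ⟨s0, st0, rfl, h0⟩, rfl⟩
  · rintro ⟨t0, (⟨s0, steps, rfl, hfin⟩ | ⟨s0, steps, rfl, hinf⟩), rfl⟩
    · exact Or.inl ⟨s0, steps.map rlStep, rfl, finRun_banged.mpr ⟨steps, hfin, rfl⟩⟩
    · exact Or.inr ⟨s0, fun n => rlStep (steps n), rfl,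
        infRun_banged.mpr ⟨steps, hinf, rfl⟩⟩

end Aux

/-- First part of Lemma 3: the identity compiler preserves trace equality.
If `P1` and `P2` have equal behaviors in the unique Source context (the
identity), then they have equal behaviors in every Target context. -/
theorem identity_compiler_preserves_trace_equality
    {Var : Type} [DecidableEq Var] (isHigh : Var → Prop) (P1 P2 : Prog Var)
    (h : beh (PStep isHigh) P1 = beh (PStep isHigh) P2) :
    ∀ CT : CtxT, beh (TStep isHigh) (plugT CT P1) = beh (TStep isHigh) (plugT CT P2) := by
  intro CT
  cases CT with
  | hole => simp only [plugT, beh_plain, h]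
  | bang => simp only [plugT, beh_banged, h]
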